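/- arXiv:2402.15904 — 2 statements merged into one kernel-verified Lean document; each statement's English description precedes it below -/
import Mathlib

section
/- Fix two alternatives, n agents, and any family (u_p)_{p ∈ [0,1]} of single-peaked utility functions, one per peak. If a mechanism f : [0,1]^n → [0,1] is continuous, strategyproof on this domain, and proportional, then f is the uniform phantom rule: f(p_1, …, p_n) = med(p_1, …, p_n, 0, 1/n, 2/n, …, (n−1)/n, 1) for every profile. -/
/-- `u` is single-peaked on `[0,1]` with peak `p`. -/
def SinglePeaked (p : ℝ) (u : ℝ → ℝ) : Prop :=
  ∀ q ∈ Set.Icc (0:ℝ) 1, q ≠ p → ∀ l ∈ Set.Ioo (0:ℝ) 1,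
    u q < u (l * p + (1 - l) * q) ∧ u (l * p + (1 - l) * q) < u p

/-- Median (middle element of the sorted list, for lists of odd length). -/
noncomputable def med (l : List ℝ) : ℝ :=
  (l.insertionSort (· ≤ ·)).getD (l.length / 2) 0

/-!
Single-peakedness makes a continuous strategyproof mechanism *uncompromising*: an agent whose peak
lies strictly above the outcome `x` may move its report anywhere in `[x, 1]` without changing `x`
(and symmetrically below). Strategyproofness alone leaves two options, that the outcome stays or
jumps beyond the old peak, and continuity with the intermediate value theorem excludes the jump.

If `x = f P < k / n` although at least `k` peaks lie above `x`, send `k` of those agents to `1`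
and everybody else to `min (P i) x`. Neither move crosses `x`, so the outcome is still `x`; but
the same profile is reached without crossing `k / n` from the single-minded profile with exactly
`k` ones, whose outcome is `k / n` by proportionality. Taking for `k` the number of phantoms
`j / n ≤ x`, this shows that at least `n + 1` of the `2 n + 1` numbers `P i`, `j / n` lie weakly
below `f P`; symmetrically at least `n + 1` lie weakly above, so `f P` is their median.
-/

open Finset Function

def IsProfile {n : ℕ} (P : Fin n → ℝ) : Prop := ∀ i, P i ∈ Set.Icc (0:ℝ) 1

def SinglePeakedDomain (u : ℝ → ℝ → ℝ) : Prop := ∀ p ∈ Set.Icc (0:ℝ) 1, SinglePeaked p (u p)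

structure IsContinuousStrategyproof {n : ℕ} (u : ℝ → ℝ → ℝ) (f : (Fin n → ℝ) → ℝ) : Prop where
  mem_Icc : ∀ P, IsProfile P → f P ∈ Set.Icc (0:ℝ) 1
  continuousOn : ContinuousOn f {P | IsProfile P}
  strategyproof : ∀ P, IsProfile P → ∀ i, ∀ p' ∈ Set.Icc (0:ℝ) 1,
    u (P i) (f (update P i p')) ≤ u (P i) (f P)

def IsProportional {n : ℕ} (f : (Fin n → ℝ) → ℝ) : Prop :=
  ∀ P : Fin n → ℝ, (∀ i, P i = 0 ∨ P i = 1) → f P = (#{i | P i = 1} : ℝ) / n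

lemma List.countP_ofFn {α : Type*} {N : ℕ} (g : Fin N → α) (p : α → Prop) [DecidablePred p] :
    (List.ofFn g).countP (fun x => decide (p x)) = #{i | p (g i)} := by
  rw [List.ofFn_eq_map, List.countP_map, card_def, filter_val, val_univ_fin,
    ← Multiset.countP_eq_card_filter, Multiset.coe_countP]
  rfl

lemma List.countP_eq_card_filter_getElem {α : Type*} (M : List α) (p : α → Prop)
    [DecidablePred p] : M.countP (fun x => decide (p x)) = #{j : Fin M.length | p M[j]} := by
  simpa using List.countP_ofFn (fun j : Fin M.length => M[j]) p

lemma List.Pairwise.countP_lt_getElem_le {α : Type*} [LinearOrder α] {M : List α}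
    (hM : M.Pairwise (· ≤ ·)) {k : ℕ} (hk : k < M.length) : M.countP (· < M[k]) ≤ k := by
  rw [M.countP_eq_card_filter_getElem (· < M[k])]
  refine (card_le_card fun j hj => ?_).trans (Fin.card_Iio ⟨k, hk⟩).le
  simp only [Finset.mem_filter, Finset.mem_univ, true_and] at hj
  exact mem_Iio.2 (lt_of_not_ge fun hkj => hj.not_ge (hM.rel_get_of_le hkj))

lemma List.Pairwise.countP_getElem_lt_le {α : Type*} [LinearOrder α] {M : List α}
    (hM : M.Pairwise (· ≤ ·)) {k : ℕ} (hk : k < M.length) :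
    M.countP (M[k] < ·) ≤ M.length - 1 - k := by
  rw [M.countP_eq_card_filter_getElem (M[k] < ·)]
  refine (card_le_card fun j hj => ?_).trans (Fin.card_Ioi ⟨k, hk⟩).le
  simp only [Finset.mem_filter, Finset.mem_univ, true_and] at hj
  exact mem_Ioi.2 (lt_of_not_ge fun hjk => hj.not_ge (hM.rel_get_of_le hjk))

lemma med_eq_getElem {L : List ℝ} {N : ℕ} (hL : L.length = 2 * N + 1)
    (hN : N < (L.insertionSort (· ≤ ·)).length) : med L = (L.insertionSort (· ≤ ·))[N] := by
  rw [med, hL, show (2 * N + 1) / 2 = N by omega, List.getD_eq_getElem _ _ hN]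

lemma med_le_of_lt_countP {L : List ℝ} {N : ℕ} (hL : L.length = 2 * N + 1) {x : ℝ}
    (h : N < L.countP (· ≤ x)) : med L ≤ x := by
  have hperm := L.perm_insertionSort (· ≤ ·)
  have hN : N < (L.insertionSort (· ≤ ·)).length := by rw [hperm.length_eq]; omega
  by_contra! hx
  have hle : L.countP (· ≤ x) ≤ L.countP (· < med L) :=
    List.countP_mono_left fun y _ hy => by simpa using (of_decide_eq_true hy).trans_lt hx
  have hcount := (L.pairwise_insertionSort (· ≤ ·)).countP_lt_getElem_le hN
  rw [← med_eq_getElem hL hN, hperm.countP_eq] at hcount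
  omega

lemma le_med_of_lt_countP {L : List ℝ} {N : ℕ} (hL : L.length = 2 * N + 1) {x : ℝ}
    (h : N < L.countP (x ≤ ·)) : x ≤ med L := by
  have hperm := L.perm_insertionSort (· ≤ ·)
  have hN : N < (L.insertionSort (· ≤ ·)).length := by rw [hperm.length_eq]; omega
  by_contra! hx
  have hle : L.countP (x ≤ ·) ≤ L.countP (med L < ·) :=
    List.countP_mono_left fun y _ hy => by simpa using hx.trans_le (of_decide_eq_true hy)
  have hcount := (L.pairwise_insertionSort (· ≤ ·)).countP_getElem_lt_le hN
  rw [← med_eq_getElem hL hN, hperm.countP_eq, hperm.length_eq] at hcount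
  omega

namespace SinglePeaked

variable {p : ℝ} {u : ℝ → ℝ}

lemma lt_peak (h : SinglePeaked p u) {q : ℝ} (hq : q ∈ Set.Icc 0 1) (hqp : q ≠ p) :
    u q < u p :=
  (h q hq hqp (1 / 2) (by norm_num)).1.trans (h q hq hqp (1 / 2) (by norm_num)).2

lemma lt_of_mem_openSegment (h : SinglePeaked p u) {q y : ℝ} (hq : q ∈ Set.Icc 0 1)
    (hqp : q ≠ p) (hy : y ∈ openSegment ℝ q p) : u q < u y := by
  obtain ⟨a, b, ha, hb, hab, rfl⟩ := hy
  convert (h q hq hqp b ⟨hb, by linarith⟩).1 using 2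
  rw [smul_eq_mul, smul_eq_mul, ← hab]
  ring

lemma strictMonoOn (h : SinglePeaked p u) (hp : p ≤ 1) : StrictMonoOn u (Set.Icc 0 p) := by
  intro x hx y hy hxy
  have hx₁ : x ∈ Set.Icc (0:ℝ) 1 := ⟨hx.1, hx.2.trans hp⟩
  rcases hy.2.eq_or_lt with rfl | hyp
  · exact h.lt_peak hx₁ hxy.ne
  · refine h.lt_of_mem_openSegment hx₁ (hxy.trans hyp).ne ?_
    rw [openSegment_eq_Ioo (hxy.trans hyp)]
    exact ⟨hxy, hyp⟩

lemma strictAntiOn (h : SinglePeaked p u) (hp : 0 ≤ p) : StrictAntiOn u (Set.Icc p 1) := by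
  intro x hx y hy hxy
  have hy₁ : y ∈ Set.Icc (0:ℝ) 1 := ⟨hp.trans hy.1, hy.2⟩
  rcases hx.1.eq_or_lt with rfl | hpx
  · exact h.lt_peak hy₁ hxy.ne'
  · refine h.lt_of_mem_openSegment hy₁ (hpx.trans hxy).ne' ?_
    rw [openSegment_symm, openSegment_eq_Ioo (hpx.trans hxy)]
    exact ⟨hpx, hxy⟩

end SinglePeaked

lemma IsProfile.update {n : ℕ} {P : Fin n → ℝ} (hP : IsProfile P) (i : Fin n) {t : ℝ}
    (ht : t ∈ Set.Icc (0:ℝ) 1) : IsProfile (update P i t) := by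
  intro j
  rw [update_apply]
  split_ifs
  exacts [ht, hP j]

namespace IsContinuousStrategyproof

variable {n : ℕ} {u : ℝ → ℝ → ℝ} {f : (Fin n → ℝ) → ℝ} {P : Fin n → ℝ} {i : Fin n} {t : ℝ}

lemma apply_update_eq_or_lt_of_lt (hf : IsContinuousStrategyproof u f)
    (hu : SinglePeakedDomain u) (hP : IsProfile P) (hi : f P < P i) (ht : t ∈ Set.Icc (f P) 1) :
    f (update P i t) = f P ∨ P i < f (update P i t) := by
  have hx := hf.mem_Icc P hP
  have ht₁ : t ∈ Set.Icc (0:ℝ) 1 := ⟨hx.1.trans ht.1, ht.2⟩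
  have hy := hf.mem_Icc _ (hP.update i ht₁)
  have truthful := hf.strategyproof P hP i t ht₁
  have deviating : u t (f P) ≤ u t (f (update P i t)) := by
    simpa using hf.strategyproof _ (hP.update i ht₁) i (P i) (hP i)
  have hxy : f P ≤ f (update P i t) := not_lt.1 fun hyx =>
    deviating.not_gt <| (hu t ht₁).strictMonoOn ht.2 ⟨hy.1, hyx.le.trans ht.1⟩ ⟨hx.1, ht.1⟩ hyx
  refine hxy.eq_or_lt.imp Eq.symm fun hxy' => not_le.1 fun hyp => truthful.not_gt ?_
  exact (hu _ (hP i)).strictMonoOn (hP i).2 ⟨hx.1, hi.le⟩ ⟨hy.1, hyp⟩ hxy'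

lemma apply_update_eq_or_lt_of_gt (hf : IsContinuousStrategyproof u f)
    (hu : SinglePeakedDomain u) (hP : IsProfile P) (hi : P i < f P) (ht : t ∈ Set.Icc 0 (f P)) :
    f (update P i t) = f P ∨ f (update P i t) < P i := by
  have hx := hf.mem_Icc P hP
  have ht₁ : t ∈ Set.Icc (0:ℝ) 1 := ⟨ht.1, ht.2.trans hx.2⟩
  have hy := hf.mem_Icc _ (hP.update i ht₁)
  have truthful := hf.strategyproof P hP i t ht₁
  have deviating : u t (f P) ≤ u t (f (update P i t)) := by
    simpa using hf.strategyproof _ (hP.update i ht₁) i (P i) (hP i)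
  have hyx : f (update P i t) ≤ f P := not_lt.1 fun hxy =>
    deviating.not_gt <| (hu t ht₁).strictAntiOn ht₁.1 ⟨ht.2, hx.2⟩ ⟨ht.2.trans hxy.le, hy.2⟩ hxy
  refine hyx.eq_or_lt.imp id fun hyx' => not_le.1 fun hpy => truthful.not_gt ?_
  exact (hu _ (hP i)).strictAntiOn (hP i).1 ⟨hpy, hy.2⟩ ⟨hi.le, hx.2⟩ hyx'

lemma apply_update_eq_of_lt (hf : IsContinuousStrategyproof u f) (hu : SinglePeakedDomain u)
    (hP : IsProfile P) (hi : f P < P i) (ht : t ∈ Set.Icc (f P) 1) : f (update P i t) = f P := by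
  have hx := hf.mem_Icc P hP
  set g : ℝ → ℝ := fun s => f (update P i s)
  have hg : ContinuousOn g (Set.Icc (f P) 1) :=
    hf.continuousOn.comp (by fun_prop : Continuous (update P i)).continuousOn
      fun s hs => hP.update i ⟨hx.1.trans hs.1, hs.2⟩
  refine (hf.apply_update_eq_or_lt_of_lt hu hP hi ht).resolve_right fun hjump => ?_
  -- a jump past `P i` would make `g` hit the midpoint of `f P` and `P i`, where neither case holds
  obtain ⟨s, hs, hgs⟩ : ∃ s ∈ Set.uIcc (P i) t, g s = (f P + P i) / 2 :=
    intermediate_value_uIcc (hg.mono (Set.uIcc_subset_Icc ⟨hi.le, (hP i).2⟩ ht))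
      (by simp only [g, update_eq_self]; exact Set.mem_uIcc.2 (Or.inl ⟨by linarith, by linarith⟩))
  have hs' : s ∈ Set.Icc (f P) 1 := Set.uIcc_subset_Icc ⟨hi.le, (hP i).2⟩ ht hs
  rcases hf.apply_update_eq_or_lt_of_lt hu hP hi hs' with h | h <;>
    simp only [g] at hgs <;> linarith

lemma apply_update_eq_of_gt (hf : IsContinuousStrategyproof u f) (hu : SinglePeakedDomain u)
    (hP : IsProfile P) (hi : P i < f P) (ht : t ∈ Set.Icc 0 (f P)) : f (update P i t) = f P := by
  have hx := hf.mem_Icc P hP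
  set g : ℝ → ℝ := fun s => f (update P i s)
  have hg : ContinuousOn g (Set.Icc 0 (f P)) :=
    hf.continuousOn.comp (by fun_prop : Continuous (update P i)).continuousOn
      fun s hs => hP.update i ⟨hs.1, hs.2.trans hx.2⟩
  refine (hf.apply_update_eq_or_lt_of_gt hu hP hi ht).resolve_right fun hjump => ?_
  obtain ⟨s, hs, hgs⟩ : ∃ s ∈ Set.uIcc (P i) t, g s = (f P + P i) / 2 :=
    intermediate_value_uIcc (hg.mono (Set.uIcc_subset_Icc ⟨(hP i).1, hi.le⟩ ht))
      (by simp only [g, update_eq_self]; exact Set.mem_uIcc.2 (Or.inr ⟨by linarith, by linarith⟩))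
  have hs' : s ∈ Set.Icc 0 (f P) := Set.uIcc_subset_Icc ⟨(hP i).1, hi.le⟩ ht hs
  rcases hf.apply_update_eq_or_lt_of_gt hu hP hi hs' with h | h <;>
    simp only [g] at hgs <;> linarith

lemma apply_eq_of_forall_noncrossing (hf : IsContinuousStrategyproof u f)
    (hu : SinglePeakedDomain u) {Q : Fin n → ℝ} (hP : IsProfile P) (hQ : IsProfile Q)
    (hPQ : ∀ i, Q i = P i ∨ (f P < P i ∧ f P ≤ Q i) ∨ (P i < f P ∧ Q i ≤ f P)) : f Q = f P := by
  suffices ∀ s : Finset (Fin n), f (s.piecewise Q P) = f P by simpa using this univ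
  intro s
  induction s using Finset.induction with
  | empty => simp
  | @insert j s hj ih =>
    have hR : IsProfile (s.piecewise Q P) := fun i =>
      s.piecewise_cases Q P (· ∈ Set.Icc (0:ℝ) 1) (hQ i) (hP i)
    have hRj : s.piecewise Q P j = P j := s.piecewise_eq_of_notMem Q P hj
    rw [s.piecewise_insert, ← ih]
    rcases hPQ j with h | ⟨hj₁, hj₂⟩ | ⟨hj₁, hj₂⟩
    · rw [h, ← hRj, update_eq_self]
    · exact hf.apply_update_eq_of_lt hu hR (by rwa [ih, hRj]) ⟨by rwa [ih], (hQ j).2⟩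
    · exact hf.apply_update_eq_of_gt hu hR (by rwa [ih, hRj]) ⟨(hQ j).1, by rwa [ih]⟩

lemma card_lt_of_apply_lt (hf : IsContinuousStrategyproof u f) (hu : SinglePeakedDomain u)
    (hprop : IsProportional f) (hP : IsProfile P) {k : ℕ} (hk : f P < k / n) :
    #{i | f P < P i} < k := by
  by_contra! hle
  obtain ⟨T, hT, rfl⟩ := exists_subset_card_eq hle
  have hx := hf.mem_Icc P hP
  set S : Fin n → ℝ := fun i => if i ∈ T then 1 else 0
  set Q : Fin n → ℝ := fun i => if i ∈ T then 1 else min (P i) (f P)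
  have hS : IsProfile S := fun i => by simp only [S]; split_ifs <;> norm_num
  have hQ : IsProfile Q := fun i => by
    simp only [Q]; split_ifs
    exacts [by norm_num, ⟨le_min (hP i).1 hx.1, (min_le_right _ _).trans hx.2⟩]
  have hfS : f S = #T / n := by
    have hones : ({i | S i = 1} : Finset (Fin n)) = T := by
      ext i
      by_cases hi : i ∈ T <;> simp [S, hi]
    rw [hprop S fun i => by simp only [S]; split_ifs <;> simp, hones]
  have hPQ : f Q = f P := hf.apply_eq_of_forall_noncrossing hu hP hQ fun i => by
    rcases lt_or_ge (f P) (P i) with h | h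
    · exact Or.inr (Or.inl ⟨h, by simp only [Q]; split_ifs <;> simp [hx.2, h.le]⟩)
    · have hi : i ∉ T := fun hi => h.not_gt (mem_filter.1 (hT hi)).2
      exact Or.inl (by simp [Q, hi, h])
  have hSQ : f Q = f S := hf.apply_eq_of_forall_noncrossing hu hS hQ fun i => by
    by_cases hi : i ∈ T
    · exact Or.inl (by simp [S, Q, hi])
    · refine Or.inr (Or.inr ⟨?_, ?_⟩) <;> rw [hfS] <;> simp only [S, Q, hi, if_false] <;>
        linarith [min_le_right (P i) (f P), hx.1]
  linarith

lemma card_lt_of_lt_apply (hf : IsContinuousStrategyproof u f) (hu : SinglePeakedDomain u)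
    (hprop : IsProportional f) (hP : IsProfile P) {k : ℕ} (hk : ((n - k : ℕ) : ℝ) / n < f P) :
    #{i | P i < f P} < k := by
  by_contra! hle
  obtain ⟨T, hT, rfl⟩ := exists_subset_card_eq hle
  have hx := hf.mem_Icc P hP
  set S : Fin n → ℝ := fun i => if i ∈ T then 0 else 1
  set Q : Fin n → ℝ := fun i => if i ∈ T then 0 else max (P i) (f P)
  have hS : IsProfile S := fun i => by simp only [S]; split_ifs <;> norm_num
  have hQ : IsProfile Q := fun i => by
    simp only [Q]; split_ifs
    exacts [by norm_num, ⟨hx.1.trans (le_max_right _ _), max_le (hP i).2 hx.2⟩]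
  have hfS : f S = ((n - #T : ℕ) : ℝ) / n := by
    have hones : ({i | S i = 1} : Finset (Fin n)) = Tᶜ := by
      ext i
      by_cases hi : i ∈ T <;> simp [S, hi]
    rw [hprop S fun i => by simp only [S]; split_ifs <;> simp, hones, card_compl, Fintype.card_fin]
  have hPQ : f Q = f P := hf.apply_eq_of_forall_noncrossing hu hP hQ fun i => by
    rcases lt_or_ge (P i) (f P) with h | h
    · exact Or.inr (Or.inr ⟨h, by simp only [Q]; split_ifs <;> simp [hx.1, h.le]⟩)
    · have hi : i ∉ T := fun hi => h.not_gt (mem_filter.1 (hT hi)).2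
      exact Or.inl (by simp [Q, hi, h])
  have hSQ : f Q = f S := hf.apply_eq_of_forall_noncrossing hu hS hQ fun i => by
    by_cases hi : i ∈ T
    · exact Or.inl (by simp [S, Q, hi])
    · refine Or.inr (Or.inl ⟨?_, ?_⟩) <;> rw [hfS] <;> simp only [S, Q, hi, if_false] <;>
        linarith [le_max_right (P i) (f P), hx.2]
  linarith

lemma lt_card_le_add_card_le (hf : IsContinuousStrategyproof u f) (hu : SinglePeakedDomain u)
    (hprop : IsProportional f) (hP : IsProfile P) :
    n < #{i | P i ≤ f P} + #{j : Fin (n + 1) | (j : ℝ) / n ≤ f P} := by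
  by_contra! h
  set k := #{j : Fin (n + 1) | (j : ℝ) / n ≤ f P}
  -- the phantoms `≤ f P` are `0, …, (k - 1) / n`, so the next one exceeds `f P`
  have hk : f P < k / n := by
    by_contra! hkx
    have hsub : (Iic ⟨k, by omega⟩ : Finset (Fin (n + 1))) ⊆
        ({j : Fin (n + 1) | (j : ℝ) / n ≤ f P} : Finset (Fin (n + 1))) :=
      fun j hj => by
        have hjk : ((j : ℕ) : ℝ) ≤ k := Nat.cast_le.2 (Fin.le_def.1 (mem_Iic.1 hj))
        simpa using (div_le_div_of_nonneg_right hjk n.cast_nonneg).trans hkx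
    have := card_le_card hsub
    rw [Fin.card_Iic] at this
    exact Nat.not_succ_le_self k this
  have hsplit := card_filter_add_card_filter_not (s := univ) fun i => P i ≤ f P
  simp only [not_le, card_univ, Fintype.card_fin] at hsplit
  have := hf.card_lt_of_apply_lt hu hprop hP hk
  omega

lemma lt_card_ge_add_card_ge (hf : IsContinuousStrategyproof u f) (hu : SinglePeakedDomain u)
    (hprop : IsProportional f) (hP : IsProfile P) :
    n < #{i | f P ≤ P i} + #{j : Fin (n + 1) | f P ≤ (j : ℝ) / n} := by
  by_contra! h
  set k := #{j : Fin (n + 1) | f P ≤ (j : ℝ) / n}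
  have hk : ((n - k : ℕ) : ℝ) / n < f P := by
    by_contra! hkx
    have hsub : (Ici ⟨n - k, by omega⟩ : Finset (Fin (n + 1))) ⊆
        ({j : Fin (n + 1) | f P ≤ (j : ℝ) / n} : Finset (Fin (n + 1))) :=
      fun j hj => by
        have hkj : ((n - k : ℕ) : ℝ) ≤ (j : ℕ) := Nat.cast_le.2 (Fin.le_def.1 (mem_Ici.1 hj))
        simpa using hkx.trans (div_le_div_of_nonneg_right hkj n.cast_nonneg)
    have := card_le_card hsub
    rw [Fin.card_Ici, Fin.val_mk, show n + 1 - (n - k) = k + 1 by omega] at this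
    exact Nat.not_succ_le_self k this
  have hsplit := card_filter_add_card_filter_not (s := univ) fun i => f P ≤ P i
  simp only [not_le, card_univ, Fintype.card_fin] at hsplit
  have := hf.card_lt_of_lt_apply hu hprop hP hk
  omega

end IsContinuousStrategyproof

/-- for two alternatives and an arbitrary single-peaked domain, every
continuous, strategyproof, and proportional mechanism is the uniform phantom rule. -/
theorem uniform_phantom_characterization {n : ℕ}
    (u : ℝ → ℝ → ℝ) (hu : ∀ p ∈ Set.Icc (0:ℝ) 1, SinglePeaked p (u p))
    (f : (Fin n → ℝ) → ℝ)
    (hfr : ∀ P : Fin n → ℝ, (∀ i, P i ∈ Set.Icc (0:ℝ) 1) → f P ∈ Set.Icc (0:ℝ) 1)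
    (hfc : ContinuousOn f {P : Fin n → ℝ | ∀ i, P i ∈ Set.Icc (0:ℝ) 1})
    (hfsp : ∀ P : Fin n → ℝ, (∀ i, P i ∈ Set.Icc (0:ℝ) 1) → ∀ i, ∀ p' ∈ Set.Icc (0:ℝ) 1,
        u (P i) (f (Function.update P i p')) ≤ u (P i) (f P))
    (hprop : ∀ P : Fin n → ℝ, (∀ i, P i = 0 ∨ P i = 1) →
        f P = ((Finset.univ.filter (fun i => P i = 1)).card : ℝ) / (n : ℝ)) :
    ∀ P : Fin n → ℝ, (∀ i, P i ∈ Set.Icc (0:ℝ) 1) →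
      f P = med (List.ofFn P ++ List.ofFn (fun k : Fin (n + 1) => (k : ℝ) / (n : ℝ))) := by
  intro P hP
  have hf : IsContinuousStrategyproof u f := ⟨hfr, hfc, hfsp⟩
  have hlen : (List.ofFn P ++ List.ofFn fun k : Fin (n + 1) => (k : ℝ) / n).length =
      2 * n + 1 := by
    simp only [List.length_append, List.length_ofFn]
    omega
  refine le_antisymm (le_med_of_lt_countP hlen ?_) (med_le_of_lt_countP hlen ?_)
  · rw [List.countP_append, List.countP_ofFn, List.countP_ofFn]
    exact hf.lt_card_ge_add_card_ge hu hprop hP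
  · rw [List.countP_append, List.countP_ofFn, List.countP_ofFn]
    exact hf.lt_card_le_add_card_le hu hprop hP
end

section
/- With Leontief utilities, the Nash product rule is continuous in the following sense: let (P^k)_{k ∈ ℕ} be a sequence of profiles converging to a profile P* (coordinatewise), and for each k let q^k be a distribution maximizing the Nash product at P^k. If the sequence (q^k) converges to a distribution q^L, then q^L maximizes the Nash product at P*. -/
open Filter Finset Topology


/-- Leontief utility of an agent with peak `p` at distribution `q`:
the minimum of `q j / p j` over alternatives `j` with `p j > 0`. -/
noncomputable def leontief {m : ℕ} (p q : Fin m → ℝ) : ℝ :=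
  sInf {x : ℝ | ∃ j, 0 < p j ∧ x = q j / p j}


lemma lset_finite {m : ℕ} (p q : Fin m → ℝ) :
    {x : ℝ | ∃ j, 0 < p j ∧ x = q j / p j}.Finite := by
  apply (Set.finite_range (fun j => q j / p j)).subset
  rintro x ⟨j, _, rfl⟩; exact ⟨j, rfl⟩

lemma lset_nonempty {m : ℕ} (p q : Fin m → ℝ) (h : ∃ j, 0 < p j) :
    {x : ℝ | ∃ j, 0 < p j ∧ x = q j / p j}.Nonempty := by
  obtain ⟨j, hj⟩ := h; exact ⟨q j / p j, j, hj, rfl⟩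

lemma leontief_le {m : ℕ} (p q : Fin m → ℝ) {j : Fin m} (hj : 0 < p j) :
    leontief p q ≤ q j / p j :=
  csInf_le (lset_finite p q).bddBelow ⟨j, hj, rfl⟩

lemma le_leontief {m : ℕ} (p q : Fin m → ℝ) {c : ℝ} (h : ∃ j, 0 < p j)
    (hc : ∀ j, 0 < p j → c ≤ q j / p j) : c ≤ leontief p q :=
  le_csInf (lset_nonempty p q h) (by rintro x ⟨j, hj, rfl⟩; exact hc j hj)

lemma leontief_nonneg {m : ℕ} (p q : Fin m → ℝ) (h : ∃ j, 0 < p j)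
    (hq : ∀ j, 0 ≤ q j) : 0 ≤ leontief p q :=
  le_leontief p q h fun j hj => div_nonneg (hq j) hj.le

lemma leontief_mem {m : ℕ} (p q : Fin m → ℝ) (h : ∃ j, 0 < p j) :
    ∃ j, 0 < p j ∧ leontief p q = q j / p j :=
  ((lset_nonempty p q h).csInf_mem (lset_finite p q))

lemma simplex_exists_pos {m : ℕ} {p : Fin m → ℝ} (hp : p ∈ stdSimplex ℝ (Fin m)) :
    ∃ j, 0 < p j := by
  by_contra h
  push_neg at h
  have h0 : ∑ j, p j = 0 := Finset.sum_eq_zero fun j _ => le_antisymm (h j) (hp.1 j)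
  rw [hp.2] at h0; norm_num at h0

lemma leontief_tendsto {m : ℕ} (pk : ℕ → Fin m → ℝ) (p : Fin m → ℝ)
    (hp : p ∈ stdSimplex ℝ (Fin m))
    (hconv : ∀ j, Tendsto (fun k => pk k j) atTop (nhds (p j)))
    (q : Fin m → ℝ) (hq : ∀ j, 0 < q j) :
    Tendsto (fun k => leontief (pk k) q) atTop (nhds (leontief p q)) := by
  set L := leontief p q with hL
  rw [tendsto_order]
  constructor
  · intro a ha
    set a' : ℝ := (a + L) / 2 with ha'
    have haa' : a < a' := by simp only [ha']; linarith
    have ha'L : a' < L := by simp only [ha']; linarith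
    have hev : ∀ᶠ k in atTop, ∀ j, 0 < pk k j → a' ≤ q j / pk k j := by
      refine Filter.eventually_all.2 fun j => ?_
      by_cases hpj : 0 < p j
      · have h1 : a' < q j / p j := lt_of_lt_of_le ha'L (leontief_le p q hpj)
        have h2 : Tendsto (fun k => q j / pk k j) atTop (nhds (q j / p j)) :=
          tendsto_const_nhds.div (hconv j) hpj.ne'
        exact (h2.eventually (eventually_gt_nhds h1)).mono (fun k hk _ => hk.le)
      · have hpj0 : p j = 0 := le_antisymm (not_lt.1 hpj) (hp.1 j)
        set B : ℝ := max a' 1 with hB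
        have hBpos : (0:ℝ) < B := lt_of_lt_of_le one_pos (le_max_right _ _)
        have hsmall : (0:ℝ) < q j / B := div_pos (hq j) hBpos
        have : ∀ᶠ k in atTop, pk k j < q j / B := by
          have := (hconv j)
          rw [hpj0] at this
          exact this.eventually (eventually_lt_nhds hsmall)
        refine this.mono fun k hk hkpos => ?_
        have h2 : pk k j * B < q j := (lt_div_iff₀ hBpos).1 hk
        have h3 : B < q j / pk k j := (lt_div_iff₀ hkpos).2 (by nlinarith)
        exact le_trans (le_max_left _ _) h3.le
    obtain ⟨j₀, hj₀⟩ := simplex_exists_pos hp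
    have hpos0 : ∀ᶠ k in atTop, 0 < pk k j₀ :=
      (hconv j₀).eventually (eventually_gt_nhds hj₀)
    filter_upwards [hev, hpos0] with k hk hk0
    exact lt_of_lt_of_le haa' (le_leontief _ _ ⟨j₀, hk0⟩ hk)
  · intro b hb
    obtain ⟨j₀, hj₀, hLe⟩ := leontief_mem p q (simplex_exists_pos hp)
    have h1 : ∀ᶠ k in atTop, 0 < pk k j₀ :=
      (hconv j₀).eventually (eventually_gt_nhds hj₀)
    have h2 : Tendsto (fun k => q j₀ / pk k j₀) atTop (nhds (q j₀ / p j₀)) :=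
      tendsto_const_nhds.div (hconv j₀) hj₀.ne'
    have h3 : ∀ᶠ k in atTop, q j₀ / pk k j₀ < b :=
      h2.eventually (eventually_lt_nhds (by rw [← hLe]; exact hb))
    filter_upwards [h1, h3] with k hk1 hk3
    exact lt_of_le_of_lt (leontief_le _ _ hk1) hk3

/-- `q` maximizes the Nash product of Leontief utilities at profile `P`. -/
def NashMax {m n : ℕ} (P : Fin n → Fin m → ℝ) (q : Fin m → ℝ) : Prop :=
  q ∈ stdSimplex ℝ (Fin m) ∧
    ∀ q' ∈ stdSimplex ℝ (Fin m), ∏ i, leontief (P i) q' ≤ ∏ i, leontief (P i) q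

/-- with Leontief utilities, the Nash product rule is continuous: if a
sequence of profiles `P^k` converges to a profile `P*`, each `q^k` maximizes the Nash
product at `P^k`, and `q^k` converges to a distribution `q^L`, then `q^L` maximizes the
Nash product at `P*`. -/
theorem nash_rule_continuous {m n : ℕ}
    (Pk : ℕ → Fin n → Fin m → ℝ) (Pstar : Fin n → Fin m → ℝ)
    (hPk : ∀ k i, Pk k i ∈ stdSimplex ℝ (Fin m))
    (hPstar : ∀ i, Pstar i ∈ stdSimplex ℝ (Fin m))
    (hPconv : ∀ i j, Filter.Tendsto (fun k => Pk k i j) Filter.atTop (nhds (Pstar i j)))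
    (qk : ℕ → Fin m → ℝ) (hqk : ∀ k, NashMax (Pk k) (qk k))
    (qL : Fin m → ℝ) (hqL : qL ∈ stdSimplex ℝ (Fin m))
    (hqconv : ∀ j, Filter.Tendsto (fun k => qk k j) Filter.atTop (nhds (qL j))) :
    NashMax Pstar qL := by
  have hm : 0 < m := by
    rcases Nat.eq_zero_or_pos m with h | h
    · exfalso
      have h2 := hqL.2
      subst h
      simp at h2
    · exact h
  refine ⟨hqL, fun q' hq' => ?_⟩
  -- minimizers at qL
  choose js hjs hjseq using fun i => leontief_mem (Pstar i) qL (simplex_exists_pos (hPstar i))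
  have hC : Tendsto (fun k => ∏ i, qk k (js i) / Pk k i (js i)) atTop
      (nhds (∏ i, leontief (Pstar i) qL)) := by
    apply tendsto_finset_prod
    intro i _
    rw [hjseq i]
    exact (hqconv (js i)).div (hPconv i (js i)) (hjs i).ne'
  have hEv : ∀ᶠ k in atTop,
      (∏ i, leontief (Pk k i) (qk k)) ≤ ∏ i, qk k (js i) / Pk k i (js i) := by
    have hpos : ∀ᶠ k in atTop, ∀ i, 0 < Pk k i (js i) :=
      eventually_all.2 fun i => (hPconv i (js i)).eventually (eventually_gt_nhds (hjs i))
    filter_upwards [hpos] with k hk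
    refine Finset.prod_le_prod (fun i _ => ?_) (fun i _ => ?_)
    · exact leontief_nonneg _ _ (simplex_exists_pos (hPk k i)) (hqk k).1.1
    · exact leontief_le _ _ (hk i)
  have key : ∀ δ : ℝ, 0 < δ → δ < 1 →
      (1 - δ) ^ n * ∏ i, leontief (Pstar i) q' ≤ ∏ i, leontief (Pstar i) qL := by
    intro δ hδ0 hδ1
    set q'' : Fin m → ℝ := fun j => (1 - δ) * q' j + δ / m with hq''def
    have hq''pos : ∀ j, 0 < q'' j := fun j =>
      add_pos_of_nonneg_of_pos (mul_nonneg (by linarith) (hq'.1 j))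
        (div_pos hδ0 (Nat.cast_pos.2 hm))
    have hq''mem : q'' ∈ stdSimplex ℝ (Fin m) := by
      refine ⟨fun j => (hq''pos j).le, ?_⟩
      simp only [hq''def]
      rw [Finset.sum_add_distrib, ← Finset.mul_sum, hq'.2, Finset.sum_const,
        Finset.card_univ, Fintype.card_fin, mul_one, nsmul_eq_mul,
        mul_div_cancel₀ _ (by exact_mod_cast hm.ne' : (m:ℝ) ≠ 0)]
      ring
    -- Step A
    have stepA : (1 - δ) ^ n * ∏ i, leontief (Pstar i) q'
        ≤ ∏ i, leontief (Pstar i) q'' := by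
      have hterm : ∀ i : Fin n,
          (1 - δ) * leontief (Pstar i) q' ≤ leontief (Pstar i) q'' := by
        intro i
        refine le_leontief _ _ (simplex_exists_pos (hPstar i)) fun j hj => ?_
        have h1 : leontief (Pstar i) q' ≤ q' j / Pstar i j := leontief_le _ _ hj
        have h2 : (1 - δ) * (q' j / Pstar i j) ≤ q'' j / Pstar i j := by
          rw [← mul_div_assoc]
          have hnum : (1 - δ) * q' j ≤ q'' j := by
            have hdm : 0 ≤ δ / m := le_of_lt (div_pos hδ0 (Nat.cast_pos.2 hm))
            simp only [hq''def]
            linarith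
          exact (div_le_div_iff_of_pos_right hj).2 hnum
        calc (1 - δ) * leontief (Pstar i) q'
            ≤ (1 - δ) * (q' j / Pstar i j) :=
              mul_le_mul_of_nonneg_left h1 (by linarith)
          _ ≤ q'' j / Pstar i j := h2
      calc (1 - δ) ^ n * ∏ i, leontief (Pstar i) q'
          = ∏ i : Fin n, ((1 - δ) * leontief (Pstar i) q') := by
            rw [Finset.prod_mul_distrib, Finset.prod_const, Finset.card_univ,
              Fintype.card_fin]
        _ ≤ ∏ i, leontief (Pstar i) q'' := by
            refine Finset.prod_le_prod (fun i _ => ?_) (fun i _ => hterm i)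
            exact mul_nonneg (by linarith)
              (leontief_nonneg _ _ (simplex_exists_pos (hPstar i)) hq'.1)
    -- Step B
    have hA : Tendsto (fun k => ∏ i, leontief (Pk k i) q'') atTop
        (nhds (∏ i, leontief (Pstar i) q'')) := by
      apply tendsto_finset_prod
      intro i _
      exact leontief_tendsto (fun k => Pk k i) (Pstar i) (hPstar i)
        (fun j => hPconv i j) q'' hq''pos
    have hEv2 : ∀ᶠ k in atTop,
        (∏ i, leontief (Pk k i) q'') ≤ ∏ i, qk k (js i) / Pk k i (js i) := by
      filter_upwards [hEv] with k hk
      exact le_trans ((hqk k).2 q'' hq''mem) hk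
    exact stepA.trans (le_of_tendsto_of_tendsto hA hC hEv2)
  -- take δ → 0 along 1/(t+2)
  have h0 : Tendsto (fun t : ℕ => 1 / ((t:ℝ) + 1)) atTop (nhds 0) :=
    tendsto_one_div_add_atTop_nhds_zero_nat
  have hδt : Tendsto (fun t : ℕ => (1 - 1 / ((t:ℝ) + 1)) ^ n * ∏ i, leontief (Pstar i) q')
      atTop (nhds (∏ i, leontief (Pstar i) q')) := by
    have h1 := (((tendsto_const_nhds (x := (1:ℝ))).sub h0).pow n).mul_const (∏ i, leontief (Pstar i) q')
    simpa using h1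
  refine le_of_tendsto hδt ?_
  filter_upwards [eventually_ge_atTop 1] with t ht
  refine key _ (by positivity) ?_
  rw [div_lt_one (by positivity)]
  have h2 : (1:ℝ) ≤ (t:ℝ) := by exact_mod_cast ht
  linarith
end
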